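/- For every real number s < 0, setting h = (3/2)s − 1/(2s), t = −(1/2)s − 1/(2s), and ℓ = (1 − s²)/√(−s), the polynomial identity (h − x)(1 − x²) − ℓ²/2 = (x − s)²(x − t) holds for all real x. -/
import Mathlib

/-- For every real `s < 0`, setting `h = (3/2)s − 1/(2s)`,
`t = −(1/2)s − 1/(2s)`, and `ℓ = (1 − s²)/√(−s)`, the polynomial identity
`(h − x)(1 − x²) − ℓ²/2 = (x − s)²(x − t)` holds for all real `x`. -/
theorem discriminant_locus_parametrization (s : ℝ) (hs : s < 0)
    (h t ℓ : ℝ) (hh : h = (3 / 2) * s - 1 / (2 * s))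
    (ht : t = -(1 / 2) * s - 1 / (2 * s))
    (hℓ : ℓ = (1 - s ^ 2) / Real.sqrt (-s)) :
    ∀ x : ℝ, (h - x) * (1 - x ^ 2) - ℓ ^ 2 / 2 = (x - s) ^ 2 * (x - t) := by
  intro x
  have hs' : s ≠ 0 := ne_of_lt hs
  have hsq : Real.sqrt (-s) ^ 2 = -s := Real.sq_sqrt (by linarith)
  have hsqrt : Real.sqrt (-s) ≠ 0 :=
    ne_of_gt (Real.sqrt_pos.mpr (by linarith))
  subst hh ht hℓ
  field_simp
  rw [hsq]
  ring
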